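/- Let Q1, Q2 be quadratic forms on R^3 satisfying the nondegeneracy condition of Theorem 1.1. For any four-dimensional subspace V ⊂ R^5, the set {ξ ∈ R^3 : dim(π_ξ(V)) ≤ 2} is contained in the zero set of a nonzero polynomial of degree at most 2. -/

import Mathlib

/-!
Let `n ≠ 0` span `Vᗮ` and let `T_ξ` be the tangent space at `ξ`. If `π_ξ(V)` has dimension
at most 2, the kernel `V ∩ T_ξᗮ` of `π_ξ` on `V` is all of the plane `T_ξᗮ`, so `n ∈ T_ξ`.
Writing `n = (x, d₁, d₂)`, this says `d_i = ∇Q_i(ξ) ⬝ x` for `i = 1, 2`: two affine equations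
in `ξ`, and the sum of the squares of their defects is the required quadratic polynomial. It is
nonzero because otherwise `x` would be a common null vector of `A₁` and `A₂`, which the
nondegeneracy condition excludes unless `n = 0`.
-/

open Matrix

/-- The three tangent vectors `n₁(ξ), n₂(ξ), n₃(ξ)` of the surface
`(r,s,t,Q₁(r,s,t),Q₂(r,s,t))` at the point `ξ`, where `Q_i(v) = v ⬝ A_i v`. -/
noncomputable def tangentVec (A₁ A₂ : Matrix (Fin 3) (Fin 3) ℝ) (ξ : Fin 3 → ℝ) :
    Fin 3 → EuclideanSpace ℝ (Fin 5) :=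
  ![(WithLp.toLp 2 ![1, 0, 0, ((2 : ℝ) • A₁.mulVec ξ) 0, ((2 : ℝ) • A₂.mulVec ξ) 0] :
      EuclideanSpace ℝ (Fin 5)),
    WithLp.toLp 2 ![0, 1, 0, ((2 : ℝ) • A₁.mulVec ξ) 1, ((2 : ℝ) • A₂.mulVec ξ) 1],
    WithLp.toLp 2 ![0, 0, 1, ((2 : ℝ) • A₁.mulVec ξ) 2, ((2 : ℝ) • A₂.mulVec ξ) 2]]

/-- The tangent space to the surface `(r,s,t,Q₁,Q₂)` at `ξ`, as a subspace of `ℝ⁵`. -/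
noncomputable def tangentSpace (A₁ A₂ : Matrix (Fin 3) (Fin 3) ℝ) (ξ : Fin 3 → ℝ) :
    Submodule ℝ (EuclideanSpace ℝ (Fin 5)) :=
  Submodule.span ℝ (Set.range (tangentVec A₁ A₂ ξ))

/-- The nondegeneracy condition of Theorem 1.1: for every nonzero `(u,v,w)`, the determinant
of the matrix with rows `∇Q₁(ξ), ∇Q₂(ξ), (u,v,w)` is not the zero polynomial in `ξ`. -/
def NondegCond (A₁ A₂ : Matrix (Fin 3) (Fin 3) ℝ) : Prop :=
  ∀ x : Fin 3 → ℝ, x ≠ 0 →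
    ∃ ξ : Fin 3 → ℝ,
      (Matrix.of ![(2 : ℝ) • A₁.mulVec ξ, (2 : ℝ) • A₂.mulVec ξ, x]).det ≠ 0

open Module MvPolynomial

section Projection

variable {𝕜 E : Type*} [RCLike 𝕜] [NormedAddCommGroup E] [InnerProductSpace 𝕜 E]
  [FiniteDimensional 𝕜 E]

/-- The kernel `V ⊓ Kᗮ` of the projection restricted to `V` has dimension at least
`finrank Kᗮ`, hence is `Kᗮ`. -/
theorem Submodule.orthogonal_le_of_finrank_map_orthogonalProjectionOnto_add_le
    {K V : Submodule 𝕜 E}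
    (h : finrank 𝕜 (V.map K.orthogonalProjectionOnto.toLinearMap) + finrank 𝕜 Kᗮ ≤
      finrank 𝕜 V) :
    Vᗮ ≤ K := by
  have hrank := LinearMap.finrank_range_add_finrank_ker
    (K.orthogonalProjectionOnto.toLinearMap.domRestrict V)
  rw [LinearMap.range_domRestrict, LinearMap.ker_domRestrict,
    Submodule.ker_orthogonalProjectionOnto, ← Submodule.finrank_map_subtype_eq V,
    Submodule.map_comap_subtype] at hrank
  have hKV : V ⊓ Kᗮ = Kᗮ := Submodule.eq_of_le_of_finrank_le inf_le_right (by omega)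
  simpa using Submodule.orthogonal_le (hKV ▸ inf_le_left : Kᗮ ≤ V)

end Projection

section AffinePoly

variable {σ R : Type*} [Fintype σ] [CommRing R]

noncomputable def affinePoly (b : σ → R) (d : R) : MvPolynomial σ R :=
  ∑ i, C (b i) * X i + C d

@[simp]
theorem eval_affinePoly (b : σ → R) (d : R) (ξ : σ → R) :
    eval ξ (affinePoly b d) = b ⬝ᵥ ξ + d := by
  simp [affinePoly, dotProduct]

theorem totalDegree_affinePoly_le (b : σ → R) (d : R) : (affinePoly b d).totalDegree ≤ 1 := by
  refine (totalDegree_add _ _).trans (max_le ?_ (by simp))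
  refine (totalDegree_finsetSum _ _).trans (Finset.sup_le fun i _ => ?_)
  rw [C_mul_X_eq_monomial]
  exact (totalDegree_monomial_le _ _).trans (by simp)

theorem affinePoly_eq_zero_iff [DecidableEq σ] {b : σ → R} {d : R} :
    affinePoly b d = 0 ↔ b = 0 ∧ d = 0 := by
  refine ⟨fun h => ?_, fun ⟨hb, hd⟩ => by simp [affinePoly, hb, hd]⟩
  have heval (ξ : σ → R) : b ⬝ᵥ ξ + d = 0 := by rw [← eval_affinePoly, h, map_zero]
  have hd : d = 0 := by simpa using heval 0
  exact ⟨funext fun i => by simpa [hd] using heval (Pi.single i 1), hd⟩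

end AffinePoly

theorem MvPolynomial.eq_zero_and_eq_zero_of_sq_add_sq_eq_zero {σ : Type*}
    {p q : MvPolynomial σ ℝ} (h : p ^ 2 + q ^ 2 = 0) : p = 0 ∧ q = 0 := by
  have hpq (ξ : σ → ℝ) : eval ξ p = 0 ∧ eval ξ q = 0 := by
    have := congrArg (eval ξ) h
    simp only [map_add, map_pow, map_zero] at this
    constructor <;> nlinarith [sq_nonneg (eval ξ p), sq_nonneg (eval ξ q)]
  exact ⟨funext fun ξ => by simp [(hpq ξ).1], funext fun ξ => by simp [(hpq ξ).2]⟩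

/-- With its last row chosen orthogonal to `x`, every row of the matrix in `NondegCond` is
orthogonal to `x`, so the matrix is singular unless `x = 0`. -/
theorem NondegCond.eq_zero_of_vecMul_eq_zero {A₁ A₂ : Matrix (Fin 3) (Fin 3) ℝ}
    (hnd : NondegCond A₁ A₂) {x : Fin 3 → ℝ} (h₁ : x ᵥ* A₁ = 0) (h₂ : x ᵥ* A₂ = 0) :
    x = 0 := by
  by_contra hx
  obtain ⟨y, hy0, hxy⟩ := exists_ne_zero_dotProduct_eq_zero x
  obtain ⟨ξ, hdet⟩ := hnd y hy0
  refine hx (eq_zero_of_mulVec_eq_zero hdet ?_)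
  have hrow (A : Matrix (Fin 3) (Fin 3) ℝ) (hA : x ᵥ* A = 0) :
      ((2 : ℝ) • A *ᵥ ξ) ⬝ᵥ x = 0 := by
    rw [dotProduct_comm, dotProduct_smul, dotProduct_mulVec, hA, zero_dotProduct, smul_zero]
  ext i
  fin_cases i
  · exact hrow A₁ h₁
  · exact hrow A₂ h₂
  · simpa [dotProduct_comm] using hxy

section TangentSpace

variable (A₁ A₂ : Matrix (Fin 3) (Fin 3) ℝ) (ξ : Fin 3 → ℝ)

theorem sum_smul_tangentVec (c : Fin 3 → ℝ) :
    ∑ i, c i • tangentVec A₁ A₂ ξ i =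
      WithLp.toLp 2 ![c 0, c 1, c 2, 2 * (A₁ *ᵥ ξ ⬝ᵥ c), 2 * (A₂ *ᵥ ξ ⬝ᵥ c)] := by
  ext k
  fin_cases k <;> simp [tangentVec, dotProduct, Fin.sum_univ_three] <;> ring

theorem linearIndependent_tangentVec : LinearIndependent ℝ (tangentVec A₁ A₂ ξ) := by
  refine Fintype.linearIndependent_iff.mpr fun c hc i => ?_
  rw [sum_smul_tangentVec] at hc
  fin_cases i
  · simpa using congrArg (· 0) hc
  · simpa using congrArg (· 1) hc
  · simpa using congrArg (· 2) hc

theorem finrank_tangentSpace : finrank ℝ (tangentSpace A₁ A₂ ξ) = 3 := by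
  rw [tangentSpace, finrank_span_eq_card (linearIndependent_tangentVec A₁ A₂ ξ),
    Fintype.card_fin]

theorem apply_three_and_four_of_mem_tangentSpace {n : EuclideanSpace ℝ (Fin 5)}
    (hn : n ∈ tangentSpace A₁ A₂ ξ) :
    n 3 = 2 * (A₁ *ᵥ ξ ⬝ᵥ ![n 0, n 1, n 2]) ∧
      n 4 = 2 * (A₂ *ᵥ ξ ⬝ᵥ ![n 0, n 1, n 2]) := by
  obtain ⟨c, rfl⟩ := (Submodule.mem_span_range_iff_exists_fun ℝ).mp hn
  have hc : ![c 0, c 1, c 2] = c := by ext i; fin_cases i <;> rfl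
  simp [sum_smul_tangentVec, hc]

end TangentSpace

section TangencyPoly

variable {A₁ A₂ : Matrix (Fin 3) (Fin 3) ℝ}

/-- Vanishes exactly at the `ξ` with `n ∈ tangentSpace A₁ A₂ ξ`. -/
noncomputable def tangencyPoly (A₁ A₂ : Matrix (Fin 3) (Fin 3) ℝ)
    (n : EuclideanSpace ℝ (Fin 5)) : MvPolynomial (Fin 3) ℝ :=
  affinePoly ((2 : ℝ) • (![n 0, n 1, n 2] ᵥ* A₁)) (-n 3) ^ 2 +
    affinePoly ((2 : ℝ) • (![n 0, n 1, n 2] ᵥ* A₂)) (-n 4) ^ 2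

theorem totalDegree_tangencyPoly_le (n : EuclideanSpace ℝ (Fin 5)) :
    (tangencyPoly A₁ A₂ n).totalDegree ≤ 2 := by
  refine (totalDegree_add _ _).trans (max_le ?_ ?_) <;>
    refine (totalDegree_pow _ 2).trans ?_ <;>
    grw [totalDegree_affinePoly_le]

theorem eval_tangencyPoly_eq_zero {n : EuclideanSpace ℝ (Fin 5)} {ξ : Fin 3 → ℝ}
    (hn : n ∈ tangentSpace A₁ A₂ ξ) : eval ξ (tangencyPoly A₁ A₂ n) = 0 := by
  have hdot (A : Matrix (Fin 3) (Fin 3) ℝ) (x : Fin 3 → ℝ) :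
      ((2 : ℝ) • (x ᵥ* A)) ⬝ᵥ ξ = 2 * (A *ᵥ ξ ⬝ᵥ x) := by
    rw [smul_dotProduct, ← dotProduct_mulVec, dotProduct_comm, smul_eq_mul]
  obtain ⟨h₃, h₄⟩ := apply_three_and_four_of_mem_tangentSpace A₁ A₂ ξ hn
  rw [tangencyPoly, map_add, map_pow, map_pow, eval_affinePoly, eval_affinePoly, hdot, hdot,
    ← h₃, ← h₄]
  ring

theorem tangencyPoly_ne_zero (hnd : NondegCond A₁ A₂) {n : EuclideanSpace ℝ (Fin 5)}
    (hn : n ≠ 0) : tangencyPoly A₁ A₂ n ≠ 0 := by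
  intro hp
  obtain ⟨⟨hb₁, hn₃⟩, ⟨hb₂, hn₄⟩⟩ := And.imp affinePoly_eq_zero_iff.mp
    affinePoly_eq_zero_iff.mp (eq_zero_and_eq_zero_of_sq_add_sq_eq_zero hp)
  have hx : ![n 0, n 1, n 2] = 0 :=
    hnd.eq_zero_of_vecMul_eq_zero (by simpa using hb₁) (by simpa using hb₂)
  refine hn (PiLp.ext fun k => ?_)
  fin_cases k
  · simpa using congrFun hx 0
  · simpa using congrFun hx 1
  · simpa using congrFun hx 2
  · simpa using hn₃
  · simpa using hn₄

end TangencyPoly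

theorem stmt14_general (A₁ A₂ : Matrix (Fin 3) (Fin 3) ℝ)
    (hnd : NondegCond A₁ A₂)
    (V : Submodule ℝ (EuclideanSpace ℝ (Fin 5))) (hV : Module.finrank ℝ V = 4) :
    ∃ p : MvPolynomial (Fin 3) ℝ, p ≠ 0 ∧ p.totalDegree ≤ 2 ∧
      ∀ ξ : Fin 3 → ℝ,
        Module.finrank ℝ
            (V.map ((tangentSpace A₁ A₂ ξ).orthogonalProjectionOnto).toLinearMap) ≤ 2 →
          MvPolynomial.eval ξ p = 0 := by
  have hV_ne_top : V ≠ ⊤ := fun h => by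
    rw [h, finrank_top, finrank_euclideanSpace_fin] at hV
    omega
  obtain ⟨n, hnV, hn0⟩ := (Submodule.ne_bot_iff _).mp
    (mt Submodule.orthogonal_eq_bot_iff.mp hV_ne_top)
  refine ⟨tangencyPoly A₁ A₂ n, tangencyPoly_ne_zero hnd hn0, totalDegree_tangencyPoly_le n,
    fun ξ hξ => eval_tangencyPoly_eq_zero ?_⟩
  have hT := (tangentSpace A₁ A₂ ξ).finrank_add_finrank_orthogonal
  rw [finrank_tangentSpace, finrank_euclideanSpace_fin] at hT
  exact Submodule.orthogonal_le_of_finrank_map_orthogonalProjectionOnto_add_le (by omega) hnV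

/-- For a four-dimensional subspace `V ⊂ ℝ⁵`, the set of points `ξ` where the orthogonal
projection of `V` onto the tangent space of the surface at `ξ` has dimension at most 2 is
contained in the zero set of a nonzero polynomial of degree at most 2. -/
theorem stmt14 (A₁ A₂ : Matrix (Fin 3) (Fin 3) ℝ) (hA₁ : A₁.IsSymm) (hA₂ : A₂.IsSymm)
    (hnd : NondegCond A₁ A₂)
    (V : Submodule ℝ (EuclideanSpace ℝ (Fin 5))) (hV : Module.finrank ℝ V = 4) :
    ∃ p : MvPolynomial (Fin 3) ℝ, p ≠ 0 ∧ p.totalDegree ≤ 2 ∧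
      ∀ ξ : Fin 3 → ℝ,
        Module.finrank ℝ
            (V.map ((tangentSpace A₁ A₂ ξ).orthogonalProjectionOnto).toLinearMap) ≤ 2 →
          MvPolynomial.eval ξ p = 0 :=
  stmt14_general A₁ A₂ hnd V hV
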